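/- Let l ≥ 1, let ξ ∈ V_l, and let m ≥ 1, n ≥ 0 be integers. Then in ℓ²(W): h(ξ_{m,n}) = ξ_{m+1,n} + p·ξ_{m,n} + (L−1)·ξ_{m−1,n}. -/

import Mathlib

noncomputable section

open scoped ComplexInnerProductSpace

namespace UCoxMasa

/-- The universal Coxeter matrix on `Fin L`: all off-diagonal entries are `0` (representing ∞). -/
def Mat (L : ℕ) : CoxeterMatrix (Fin L) where
  M := fun i j => if i = j then 1 else 0
  isSymm := by
    ext i j
    by_cases h : i = j <;> simp [Matrix.transpose, h, eq_comm]
  diagonal := fun i => by simp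
  off_diagonal := fun i j h => by simp [h]

/-- The universal Coxeter group on `L` generators: free product of `L` copies of `ℤ/2ℤ`. -/
abbrev W (L : ℕ) : Type := (Mat L).Group

/-- The distinguished Coxeter system of `W L`. -/
def cs (L : ℕ) : CoxeterSystem (Mat L) (W L) := CoxeterMatrix.toCoxeterSystem (Mat L)

/-- The simple reflection associated to `i : Fin L`. -/
def σ {L : ℕ} (i : Fin L) : W L := (cs L).simple i

/-- Word length on `W L` with respect to the generating set of simple reflections. -/
def len {L : ℕ} (w : W L) : ℕ := (cs L).length w

/-- The Hilbert space `ℓ²(W)`. -/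
abbrev H (L : ℕ) : Type := lp (fun _ : W L => ℂ) 2

/-- The standard orthonormal basis vector `δ_w` of `ℓ²(W)`. -/
def δ {L : ℕ} (w : W L) : H L :=
  letI := Classical.decEq (W L)
  lp.single 2 w 1

/-- `V l`: the linear span of `{δ_w : ℓ(w) = l}`. -/
def V (L : ℕ) (l : ℕ) : Submodule ℂ (H L) :=
  Submodule.span ℂ {x : H L | ∃ w : W L, len w = l ∧ x = δ w}

/-- `S_l`: the linear span of `q_l(h V_{l-1}) ∪ q_l(R_h V_{l-1})`,
given the projections `Q`, the operator `h` and the right operator `Rh`. -/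
def Sl (L : ℕ) (Q : ℕ → (H L →L[ℂ] H L)) (h Rh : H L →L[ℂ] H L) (l : ℕ) :
    Submodule ℂ (H L) :=
  Submodule.span ℂ
    ({x : H L | ∃ y ∈ V L (l - 1), x = Q l (h y)} ∪
      {x : H L | ∃ y ∈ V L (l - 1), x = Q l (Rh y)})

end UCoxMasa

/-!
For `ℓ(u) = N`, the component of length `ℓ(v) + N` of `T_v δ_u` is `δ_{vu}` when
`ℓ(vu) = ℓ(v) + ℓ(u)` and zero otherwise (induction along a left descent of `v`), so
`q_{m+N}(h_m δ_u)` is the sum of the `δ_{vu}` over the `v` of length `m` with `vu` reduced.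

In the universal Coxeter group every `x ≠ 1` has exactly one left descent: `W` acts on words
without equal adjacent letters by cancelling or prepending a letter, and the orbit of the empty
word is a normal form of length `ℓ`, whose first letter is the only left descent. Hence
`h δ_x = Σ_s δ_{sx} + p δ_x`, and `v ↦ sv` maps the `v` of length `m ≥ 1` with `vu` reduced
bijectively onto the `v'` of length `m + 1` with left descent `s` together with the `v'` of length
`m - 1` that `s` lengthens. Summing over `s`, each `v'` of length `m + 1` is hit once and each `v'`
of length `m - 1` exactly `L - 1` times.

The right operators `h_n^r` raise lengths by at most `n`, so modulo vectors killed by the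
projections `h_n^r ξ` may be replaced by its component in `V_{n+l}`, which reduces the statement
to `n = 0`.
-/

namespace UCoxMasa

section

variable {L : ℕ}

lemma len_mul_le (a b : W L) : len (a * b) ≤ len a + len b := (cs L).length_mul_le a b

lemma len_simple_mul (w : W L) (s : Fin L) :
    len (σ s * w) = len w + 1 ∨ len (σ s * w) + 1 = len w :=
  (cs L).length_simple_mul w s

lemma len_mul_simple (w : W L) (s : Fin L) :
    len (w * σ s) = len w + 1 ∨ len (w * σ s) + 1 = len w :=
  (cs L).length_mul_simple w s

lemma len_eq_zero_iff {w : W L} : len w = 0 ↔ w = 1 := (cs L).length_eq_zero_iff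

lemma simple_mul_simple_cancel_left (s : Fin L) (w : W L) : σ s * (σ s * w) = w :=
  (cs L).simple_mul_simple_cancel_left s

def flipHead (i : Fin L) (ω : List (Fin L)) : List (Fin L) :=
  if ω.head? = some i then ω.tail else i :: ω

lemma isChain_flipHead (i : Fin L) {ω : List (Fin L)} (hω : ω.IsChain (· ≠ ·)) :
    (flipHead i ω).IsChain (· ≠ ·) := by
  unfold flipHead
  split_ifs with h
  · exact hω.tail
  · exact List.isChain_cons.mpr ⟨fun j hj hij => h (hij ▸ hj), hω⟩

lemma flipHead_flipHead (i : Fin L) {ω : List (Fin L)} (hω : ω.IsChain (· ≠ ·)) :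
    flipHead i (flipHead i ω) = ω := by
  rcases ω with _ | ⟨j, t⟩
  · simp [flipHead]
  · by_cases hji : j = i
    · subst hji
      have : t.head? ≠ some j := fun ht => (List.isChain_cons.mp hω).1 j ht rfl
      simp [flipHead, this]
    · simp [flipHead, hji]

def flipPerm (i : Fin L) : Equiv.Perm {ω : List (Fin L) // ω.IsChain (· ≠ ·)} where
  toFun ω := ⟨flipHead i ω, isChain_flipHead i ω.2⟩
  invFun ω := ⟨flipHead i ω, isChain_flipHead i ω.2⟩
  left_inv ω := Subtype.ext (flipHead_flipHead i ω.2)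
  right_inv ω := Subtype.ext (flipHead_flipHead i ω.2)

lemma isLiftable_flipPerm : (Mat L).IsLiftable flipPerm := by
  intro i j
  by_cases hij : i = j
  · subst hij
    have : (Mat L) i i = 1 := (Mat L).diagonal i
    rw [this, pow_one]
    exact Equiv.ext fun ω => Subtype.ext (flipHead_flipHead i ω.2)
  · have : (Mat L) i j = 0 := if_neg hij
    rw [this, pow_zero]

def normalForm (w : W L) : List (Fin L) :=
  ((cs L).lift ⟨flipPerm, isLiftable_flipPerm⟩ w ⟨[], List.isChain_nil⟩).1

lemma normalForm_simple_mul (i : Fin L) (w : W L) :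
    normalForm (σ i * w) = flipHead i (normalForm w) := by
  simp [normalForm, σ, (cs L).lift_apply_simple, flipPerm]

lemma wordProd_flipHead (i : Fin L) (ω : List (Fin L)) :
    (cs L).wordProd (flipHead i ω) = σ i * (cs L).wordProd ω := by
  rcases ω with _ | ⟨j, t⟩
  · simp [flipHead, σ]
  · by_cases hji : j = i
    · subst hji
      simp [flipHead, σ, CoxeterSystem.wordProd_cons]
    · simp [flipHead, hji, σ, CoxeterSystem.wordProd_cons]

lemma wordProd_normalForm (w : W L) : (cs L).wordProd (normalForm w) = w := by
  induction w using (cs L).simple_induction_left with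
  | one => simp [normalForm]
  | mul_simple_left w i ih =>
    rw [show (cs L).simple i = σ i from rfl, normalForm_simple_mul, wordProd_flipHead, ih]

lemma length_normalForm_wordProd_le (ω : List (Fin L)) :
    (normalForm ((cs L).wordProd ω)).length ≤ ω.length := by
  induction ω with
  | nil => simp [normalForm]
  | cons i ω ih =>
    rw [CoxeterSystem.wordProd_cons, show (cs L).simple i = σ i from rfl, normalForm_simple_mul,
      flipHead]
    split_ifs <;> simp <;> omega

lemma length_normalForm (w : W L) : (normalForm w).length = len w := by
  refine le_antisymm ?_ ?_
  · obtain ⟨ω, hω, rfl⟩ := (cs L).exists_isReduced w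
    exact (length_normalForm_wordProd_le ω).trans_eq hω.symm
  · have := (cs L).length_wordProd_le (normalForm w)
    rwa [wordProd_normalForm] at this

lemma head?_normalForm {w : W L} {s : Fin L} (hs : len (σ s * w) < len w) :
    (normalForm w).head? = some s := by
  by_contra hne
  have := length_normalForm (σ s * w)
  rw [normalForm_simple_mul, flipHead, if_neg hne, List.length_cons, length_normalForm] at this
  omega

lemma eq_of_isLeftDescent {w : W L} {s t : Fin L} (hs : len (σ s * w) < len w)
    (ht : len (σ t * w) < len w) : s = t :=
  Option.some.inj ((head?_normalForm hs).symm.trans (head?_normalForm ht))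

lemma card_leftDescents {x : W L} (hx : x ≠ 1) :
    (Finset.univ.filter fun s => len (σ s * x) < len x).card = 1 := by
  obtain ⟨s, hs⟩ := (cs L).exists_leftDescent_of_ne_one hx
  refine Finset.card_eq_one.mpr ⟨s, Finset.eq_singleton_iff_unique_mem.mpr ⟨?_, ?_⟩⟩
  · exact Finset.mem_filter.mpr ⟨Finset.mem_univ s, hs⟩
  · intro t ht
    exact eq_of_isLeftDescent (Finset.mem_filter.mp ht).2 hs

lemma card_not_leftDescents {x : W L} (hx : x ≠ 1) :
    ((Finset.univ.filter fun s => ¬ len (σ s * x) < len x).card : ℂ) = L - 1 := by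
  have := Finset.card_filter_add_card_filter_not (s := Finset.univ) fun s => len (σ s * x) < len x
  rw [card_leftDescents hx, Finset.card_univ, Fintype.card_fin] at this
  have hcast : ((1 + _ : ℕ) : ℂ) = L := congrArg Nat.cast this
  push_cast at hcast
  linear_combination hcast

lemma finite_setOf_len_eq (k : ℕ) : {w : W L | len w = k}.Finite := by
  refine ((List.finite_length_eq (Fin L) k).image (cs L).wordProd).subset ?_
  rintro w rfl
  obtain ⟨ω, hω, rfl⟩ := (cs L).exists_isReduced w
  exact ⟨ω, hω.symm, rfl⟩

def sphere (L k : ℕ) : Finset (W L) := (finite_setOf_len_eq k).toFinset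

lemma mem_sphere {k : ℕ} {w : W L} : w ∈ sphere L k ↔ len w = k := Set.Finite.mem_toFinset _

lemma tsum_len_eq {M : Type*} [AddCommMonoid M] [TopologicalSpace M] (A : W L → M) (k : ℕ) :
    ∑' w : {w : W L // len w = k}, A w = ∑ w ∈ sphere L k, A w := by
  have : Fintype {w : W L // len w = k} := (finite_setOf_len_eq k).fintype
  rw [tsum_fintype]
  exact (Finset.sum_subtype (sphere L k) (fun _ => mem_sphere) A).symm

def spanLenLT (L N : ℕ) : Submodule ℂ (H L) := Submodule.span ℂ (δ '' {u | len u < N})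

lemma δ_mem_spanLenLT {N : ℕ} {u : W L} (hu : len u < N) : δ u ∈ spanLenLT L N :=
  Submodule.subset_span ⟨u, hu, rfl⟩

lemma spanLenLT_mono : Monotone (spanLenLT L) := fun _ _ hNM =>
  Submodule.span_mono (Set.image_mono fun _ hu => lt_of_lt_of_le hu hNM)

lemma V_le_spanLenLT (N : ℕ) : V L N ≤ spanLenLT L (N + 1) :=
  Submodule.span_le.mpr fun _ ⟨u, hu, hx⟩ => hx ▸ δ_mem_spanLenLT (by omega)

lemma forall_mem_spanLenLT {N : ℕ} {A : H L →L[ℂ] H L} {M : Submodule ℂ (H L)}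
    (hA : ∀ u, len u < N → A (δ u) ∈ M) : ∀ z ∈ spanLenLT L N, A z ∈ M := fun _ hz =>
  (Submodule.span_le (p := M.comap (A : H L →ₗ[ℂ] H L))).mpr
    (by rintro _ ⟨u, hu, rfl⟩; exact hA u hu) hz

def IsLenProjection (Q : ℕ → H L →L[ℂ] H L) : Prop :=
  ∀ N w, Q N (δ w) = if len w = N then δ w else 0

namespace IsLenProjection

variable {Q : ℕ → H L →L[ℂ] H L}

lemma apply_eq_zero (hQ : IsLenProjection Q) {N : ℕ} {z : H L} (hz : z ∈ spanLenLT L N) :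
    Q N z = 0 :=
  (Submodule.mem_bot ℂ).mp <| forall_mem_spanLenLT
    (fun u hu => by rw [hQ N u, if_neg hu.ne]; exact zero_mem _) z hz

lemma apply_mem_V (hQ : IsLenProjection Q) {N M : ℕ} {z : H L} (hz : z ∈ spanLenLT L M) :
    Q N z ∈ V L N := by
  refine forall_mem_spanLenLT (fun u _ => ?_) z hz
  rw [hQ]
  split_ifs with hu
  · exact Submodule.subset_span ⟨u, hu, rfl⟩
  · exact zero_mem _

lemma sub_apply_mem (hQ : IsLenProjection Q) {N : ℕ} {z : H L}
    (hz : z ∈ spanLenLT L (N + 1)) : z - Q N z ∈ spanLenLT L N := by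
  refine forall_mem_spanLenLT (A := 1 - Q N) (fun u hu => ?_) z hz
  rw [sub_apply, one_apply_eq_self, hQ]
  split_ifs with hN
  · simp
  · simpa using δ_mem_spanLenLT (by omega)

end IsLenProjection

def RaisesLenBy (d : ℕ) (A : H L →L[ℂ] H L) : Prop :=
  ∀ N, ∀ z ∈ spanLenLT L N, A z ∈ spanLenLT L (N + d)

namespace RaisesLenBy

variable {d e : ℕ} {A B : H L →L[ℂ] H L}

lemma of_delta (hA : ∀ u, A (δ u) ∈ spanLenLT L (len u + d + 1)) : RaisesLenBy d A :=
  fun _ => forall_mem_spanLenLT fun u hu => spanLenLT_mono (by omega) (hA u)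

lemma mono (hA : RaisesLenBy d A) (hde : d ≤ e) : RaisesLenBy e A :=
  fun N z hz => spanLenLT_mono (by omega) (hA N z hz)

lemma comp (hA : RaisesLenBy d A) (hB : RaisesLenBy e B) : RaisesLenBy (e + d) (A ∘L B) :=
  fun N z hz => by simpa [add_assoc] using hA _ _ (hB N z hz)

lemma sum {ι : Type*} (s : Finset ι) {A : ι → H L →L[ℂ] H L}
    (hA : ∀ i ∈ s, RaisesLenBy d (A i)) : RaisesLenBy d (∑ i ∈ s, A i) := fun N z hz => by
  rw [sum_apply]
  exact Submodule.sum_mem _ fun i hi => hA i hi N z hz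

end RaisesLenBy

lemma raisesLenBy_len_of_factor {A : W L → H L →L[ℂ] H L} (hA1 : A 1 = 1)
    (hfactor : ∀ w ≠ 1, ∃ B w', RaisesLenBy 1 B ∧ len w' < len w ∧ A w = B ∘L A w')
    (w : W L) : RaisesLenBy (len w) (A w) := by
  induction hw : len w using Nat.strong_induction_on generalizing w with
  | _ k ih =>
  by_cases hw1 : w = 1
  · subst hw1
    obtain rfl : k = 0 := hw ▸ len_eq_zero_iff.mpr rfl
    rw [hA1]
    exact fun N z hz => hz
  · obtain ⟨B, w', hB, hlt, hAw⟩ := hfactor w hw1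
    rw [hAw]
    exact (hB.comp (ih _ (hw ▸ hlt) w' rfl)).mono (by omega)

lemma raisesLenBy_tsum {A : W L → H L →L[ℂ] H L} (hA : ∀ w, RaisesLenBy (len w) (A w))
    (k : ℕ) : RaisesLenBy k (∑' w : {w : W L // len w = k}, A w) := by
  rw [tsum_len_eq]
  exact RaisesLenBy.sum _ fun w hw => mem_sphere.mp hw ▸ hA w

lemma ite_mem_spanLenLT {x w : W L} (hx : len x ≤ len w + 1) (P : Prop) [Decidable P] (c : ℂ) :
    (if P then δ x + c • δ w else δ x) ∈ spanLenLT L (len w + 1 + 1) := by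
  split_ifs
  · exact add_mem (δ_mem_spanLenLT (by omega))
      (Submodule.smul_mem _ _ (δ_mem_spanLenLT (by omega)))
  · exact δ_mem_spanLenLT (by omega)

def IsLeftHeckeGenerators (c : ℂ) (T : Fin L → H L →L[ℂ] H L) : Prop :=
  ∀ s w, T s (δ w) = if len (σ s * w) < len w then δ (σ s * w) + c • δ w else δ (σ s * w)

def IsRightHeckeGenerators (c : ℂ) (T : Fin L → H L →L[ℂ] H L) : Prop :=
  ∀ s w, T s (δ w) = if len (w * σ s) < len w then δ (w * σ s) + c • δ w else δ (w * σ s)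

def IsLeftHeckeBasis (T : Fin L → H L →L[ℂ] H L) (Tw : W L → H L →L[ℂ] H L) : Prop :=
  Tw 1 = 1 ∧ ∀ s w, len (σ s * w) < len w → Tw w = T s ∘L Tw (σ s * w)

def IsRightHeckeBasis (T : Fin L → H L →L[ℂ] H L) (Tw : W L → H L →L[ℂ] H L) : Prop :=
  Tw 1 = 1 ∧ ∀ s w, len (w * σ s) < len w → Tw w = T s ∘L Tw (w * σ s)

variable {c : ℂ} {T : Fin L → H L →L[ℂ] H L} {Tw : W L → H L →L[ℂ] H L}
  {Q : ℕ → H L →L[ℂ] H L}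

lemma IsLeftHeckeGenerators.raisesLenBy_one (hT : IsLeftHeckeGenerators c T) (s : Fin L) :
    RaisesLenBy 1 (T s) :=
  .of_delta fun w => by
    rw [hT]
    exact ite_mem_spanLenLT (by rcases len_simple_mul w s with h | h <;> omega) _ c

lemma IsRightHeckeGenerators.raisesLenBy_one (hT : IsRightHeckeGenerators c T) (s : Fin L) :
    RaisesLenBy 1 (T s) :=
  .of_delta fun w => by
    rw [hT]
    exact ite_mem_spanLenLT (by rcases len_mul_simple w s with h | h <;> omega) _ c

lemma IsLeftHeckeBasis.raisesLenBy (hT : IsLeftHeckeGenerators c T) (hTw : IsLeftHeckeBasis T Tw)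
    (v : W L) : RaisesLenBy (len v) (Tw v) :=
  raisesLenBy_len_of_factor hTw.1 (fun w hw => by
    obtain ⟨s, hs⟩ := (cs L).exists_leftDescent_of_ne_one hw
    exact ⟨T s, σ s * w, hT.raisesLenBy_one s, hs, hTw.2 s w hs⟩) v

lemma IsRightHeckeBasis.raisesLenBy (hT : IsRightHeckeGenerators c T)
    (hTw : IsRightHeckeBasis T Tw) (v : W L) : RaisesLenBy (len v) (Tw v) :=
  raisesLenBy_len_of_factor hTw.1 (fun w hw => by
    obtain ⟨s, hs⟩ := (cs L).exists_rightDescent_of_ne_one hw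
    exact ⟨T s, w * σ s, hT.raisesLenBy_one s, hs, hTw.2 s w hs⟩) v

lemma IsLeftHeckeGenerators.proj_len_succ_apply (hT : IsLeftHeckeGenerators c T)
    (hQ : IsLenProjection Q) (s : Fin L) (x : W L) :
    Q (len x + 1) (T s (δ x)) = if len (σ s * x) = len x + 1 then δ (σ s * x) else 0 := by
  rw [hT]
  split_ifs <;> simp [hQ (len x + 1), *]

lemma IsLeftHeckeBasis.proj_apply_delta (hT : IsLeftHeckeGenerators c T)
    (hTw : IsLeftHeckeBasis T Tw) (hQ : IsLenProjection Q) (v u : W L) :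
    Q (len v + len u) (Tw v (δ u)) = if len (v * u) = len v + len u then δ (v * u) else 0 := by
  induction hk : len v generalizing v with
  | zero =>
    obtain rfl := len_eq_zero_iff.mp hk
    simp [hTw.1, hQ (len u)]
  | succ k ih =>
    obtain ⟨s, hs⟩ := (cs L).exists_leftDescent_of_ne_one (w := v) (by
      rintro rfl
      simp [len] at hk)
    change len (σ s * v) < len v at hs
    have hv' : len (σ s * v) = k := by rcases len_simple_mul v s with h | h <;> omega
    have hz : Tw (σ s * v) (δ u) ∈ spanLenLT L (k + len u + 1) := by
      simpa [hv', add_comm, add_left_comm] using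
        hTw.raisesLenBy hT (σ s * v) _ _ (δ_mem_spanLenLT (lt_add_one (len u)))
    rw [hTw.2 s v hs, ContinuousLinearMap.comp_apply,
      ← sub_add_cancel (Tw (σ s * v) (δ u)) (Q (k + len u) (Tw (σ s * v) (δ u))),
      map_add, map_add, show k + 1 + len u = k + len u + 1 by omega,
      hQ.apply_eq_zero (hT.raisesLenBy_one s _ _ (hQ.sub_apply_mem hz)), zero_add, ih _ hv']
    by_cases hred : len (σ s * v * u) = k + len u
    · rw [if_pos hred, ← hred, hT.proj_len_succ_apply hQ, ← mul_assoc,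
        simple_mul_simple_cancel_left, hred]
    · rw [if_neg hred, map_zero, map_zero, if_neg]
      have h₁ := len_mul_le (σ s * v) u
      have h₂ := len_simple_mul (σ s * v * u) s
      rw [← mul_assoc, simple_mul_simple_cancel_left] at h₂
      omega

def reducedPrefixes (m : ℕ) (u : W L) : Finset (W L) :=
  (sphere L m).filter fun v => len (v * u) = m + len u

lemma mem_reducedPrefixes {m : ℕ} {u v : W L} :
    v ∈ reducedPrefixes m u ↔ len v = m ∧ len (v * u) = m + len u := by
  simp only [reducedPrefixes, Finset.mem_filter, mem_sphere]

lemma IsLeftHeckeBasis.proj_tsum_apply_delta (hT : IsLeftHeckeGenerators c T)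
    (hTw : IsLeftHeckeBasis T Tw) (hQ : IsLenProjection Q) (k : ℕ) (u : W L) :
    Q (k + len u) ((∑' v : {v : W L // len v = k}, Tw v) (δ u)) =
      ∑ v ∈ reducedPrefixes k u, δ (v * u) := by
  rw [tsum_len_eq, sum_apply, map_sum, reducedPrefixes, Finset.sum_filter]
  refine Finset.sum_congr rfl fun v hv => ?_
  rw [← mem_sphere.mp hv, hTw.proj_apply_delta hT hQ]

lemma isLeftDescent_mul_of_isLeftDescent {v u : W L} {s : Fin L} (hs : len (σ s * v) < len v)
    (hvu : len (v * u) = len v + len u) : len (σ s * (v * u)) < len (v * u) := by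
  have := len_mul_le (σ s * v) u
  rw [mul_assoc] at this
  omega

lemma isLeftDescent_mul_iff {v u : W L} (hv : v ≠ 1) (hvu : len (v * u) = len v + len u)
    (s : Fin L) : len (σ s * (v * u)) < len (v * u) ↔ len (σ s * v) < len v := by
  obtain ⟨d, hd⟩ := (cs L).exists_leftDescent_of_ne_one hv
  refine ⟨fun hs => ?_, fun hs => isLeftDescent_mul_of_isLeftDescent hs hvu⟩
  rwa [eq_of_isLeftDescent hs (isLeftDescent_mul_of_isLeftDescent hd hvu)]

lemma sum_reducedPrefixes_simple_mul {M : Type*} [AddCommMonoid M] (g : W L → M) {m : ℕ}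
    (hm : 1 ≤ m) (u : W L) (s : Fin L) :
    ∑ v ∈ reducedPrefixes m u, g (σ s * v) =
      ∑ v ∈ (reducedPrefixes (m + 1) u).filter (fun v => len (σ s * v) < len v), g v +
        ∑ v ∈ (reducedPrefixes (m - 1) u).filter
          (fun v => ¬ len (σ s * (v * u)) < len (v * u)), g v := by
  classical
  rw [← Finset.sum_union]
  · refine Finset.sum_nbij' (σ s * ·) (σ s * ·) ?_ ?_ (fun v _ => simple_mul_simple_cancel_left s v)
      (fun v _ => simple_mul_simple_cancel_left s v) (fun _ _ => rfl)
    · intro v hv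
      simp only [Finset.mem_union, Finset.mem_filter, mem_reducedPrefixes, mul_assoc,
        simple_mul_simple_cancel_left] at hv ⊢
      obtain ⟨hv, hvu⟩ := hv
      have hv1 : v ≠ 1 := by rintro rfl; simp [len] at hv; omega
      have hiff := isLeftDescent_mul_iff hv1 (u := u) (by omega) s
      have h₁ := len_simple_mul v s
      have h₂ := len_simple_mul (v * u) s
      by_cases hs : len (σ s * v) < len v
      · have := hiff.mpr hs
        omega
      · have := hiff.not.mpr hs
        omega
    · intro v hv
      simp only [Finset.mem_union, Finset.mem_filter, mem_reducedPrefixes] at hv ⊢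
      have h₁ := len_simple_mul v s
      have h₂ := len_simple_mul (v * u) s
      have h₃ := len_mul_le (σ s * v) u
      rw [mul_assoc] at h₃ ⊢
      rcases hv with ⟨⟨hv, hvu⟩, hs⟩ | ⟨⟨hv, hvu⟩, hs⟩
      · have := isLeftDescent_mul_of_isLeftDescent hs (by omega : len (v * u) = len v + len u)
        omega
      · omega
  · refine Finset.disjoint_filter_filter (Finset.disjoint_left.mpr fun v h₁ h₂ => ?_)
    rw [mem_reducedPrefixes] at h₁ h₂
    omega

lemma sum_sum_filter_eq_sum_card_smul {α β M : Type*} [Fintype α] [AddCommMonoid M]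
    (R : Finset β) (P : α → β → Prop) [∀ a b, Decidable (P a b)] (g : β → M) :
    ∑ a, ∑ b ∈ R.filter (P a), g b = ∑ b ∈ R, (Finset.univ.filter (P · b)).card • g b := by
  rw [Finset.sum_comm' (t' := R) (s' := fun b => Finset.univ.filter (P · b))]
  · simp_rw [Finset.sum_const]
  · simp [and_comm]

lemma IsLeftHeckeGenerators.sum_apply_delta (hT : IsLeftHeckeGenerators c T) {x : W L}
    (hx : x ≠ 1) : (∑ s, T s) (δ x) = ∑ s, δ (σ s * x) + c • δ x := by
  have hTs : ∀ s, T s (δ x) = δ (σ s * x) + if len (σ s * x) < len x then c • δ x else 0 :=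
    fun s => by rw [hT]; split_ifs <;> simp
  simp_rw [sum_apply, hTs, Finset.sum_add_distrib, ← Finset.sum_filter, Finset.sum_const,
    card_leftDescents hx, one_smul]

lemma IsLeftHeckeGenerators.recurrence (hT : IsLeftHeckeGenerators c T) {m : ℕ} (hm : 1 ≤ m)
    {u : W L} (hu : u ≠ 1) :
    (∑ s, T s) (∑ v ∈ reducedPrefixes m u, δ (v * u)) =
      ∑ v ∈ reducedPrefixes (m + 1) u, δ (v * u) + c • ∑ v ∈ reducedPrefixes m u, δ (v * u) +
        ((L : ℂ) - 1) • ∑ v ∈ reducedPrefixes (m - 1) u, δ (v * u) := by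
  have hne : ∀ {k v}, v ∈ reducedPrefixes k u → v * u ≠ 1 := fun hv hvu => by
    rw [mem_reducedPrefixes, hvu, (len_eq_zero_iff (w := (1 : W L))).mpr rfl] at hv
    exact hu (len_eq_zero_iff.mp (by omega))
  rw [map_sum, Finset.sum_congr rfl fun v hv => hT.sum_apply_delta (hne hv),
    Finset.sum_add_distrib, ← Finset.smul_sum, Finset.sum_comm]
  simp_rw [← mul_assoc]
  rw [Finset.sum_congr rfl fun s _ => sum_reducedPrefixes_simple_mul (δ <| · * u) hm u s,
    Finset.sum_add_distrib, sum_sum_filter_eq_sum_card_smul, sum_sum_filter_eq_sum_card_smul]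
  have hup : ∀ v ∈ reducedPrefixes (m + 1) u,
      (Finset.univ.filter fun s => len (σ s * v) < len v).card • δ (v * u) = δ (v * u) :=
    fun v hv => by
      rw [card_leftDescents (fun hv1 => by simp [hv1, mem_reducedPrefixes, len] at hv), one_smul]
  have hdown : ∀ v ∈ reducedPrefixes (m - 1) u,
      (Finset.univ.filter fun s => ¬ len (σ s * (v * u)) < len (v * u)).card • δ (v * u) =
        ((L : ℂ) - 1) • δ (v * u) :=
    fun v hv => by rw [← Nat.cast_smul_eq_nsmul ℂ, card_not_leftDescents (hne hv)]
  rw [Finset.sum_congr rfl hup, Finset.sum_congr rfl hdown, ← Finset.smul_sum]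
  abel

lemma IsLeftHeckeBasis.recurrence_of_mem_V (hT : IsLeftHeckeGenerators c T)
    (hTw : IsLeftHeckeBasis T Tw) (hQ : IsLenProjection Q) {hn : ℕ → H L →L[ℂ] H L}
    (hhn : ∀ k, hn k = ∑' w : {w : W L // len w = k}, Tw w) {N m : ℕ} (hN : 1 ≤ N)
    (hm : 1 ≤ m) {z : H L} (hz : z ∈ V L N) :
    (∑ s, T s) (Q (m + N) (hn m z)) =
      Q (m + 1 + N) (hn (m + 1) z) + c • Q (m + N) (hn m z) +
        ((L : ℂ) - 1) • Q (m - 1 + N) (hn (m - 1) z) := by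
  let F : H L →L[ℂ] H L := (∑ s, T s) ∘L Q (m + N) ∘L hn m
  let G : H L →L[ℂ] H L := Q (m + 1 + N) ∘L hn (m + 1) + c • (Q (m + N) ∘L hn m) +
    ((L : ℂ) - 1) • (Q (m - 1 + N) ∘L hn (m - 1))
  have hFG : Set.EqOn (F : H L →ₗ[ℂ] H L) (G : H L →ₗ[ℂ] H L) (V L N) := by
    refine LinearMap.eqOn_span' ?_
    rintro _ ⟨u, rfl, rfl⟩
    have hu : u ≠ 1 := fun hu1 => by simp [hu1, len] at hN
    simp only [F, G, ContinuousLinearMap.coe_coe, ContinuousLinearMap.comp_apply, add_apply,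
      smul_apply, hhn, hTw.proj_tsum_apply_delta hT hQ]
    exact hT.recurrence hm hu
  simpa [F, G] using hFG hz

end

theorem statement4_general
    (L : ℕ) (p : ℝ)
    (T : Fin L → H L →L[ℂ] H L)
    (hT : ∀ (s : Fin L) (w : W L),
      T s (δ w) =
        if len (σ s * w) < len w then δ (σ s * w) + (p : ℂ) • δ w else δ (σ s * w))
    (h : H L →L[ℂ] H L) (hh : h = ∑ s, T s)
    (Tw : W L → H L →L[ℂ] H L) (hTw1 : Tw 1 = 1)
    (hTwrec : ∀ (s : Fin L) (w : W L), len (σ s * w) < len w →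
      Tw w = T s ∘L Tw (σ s * w))
    (hn : ℕ → H L →L[ℂ] H L)
    (hhn : ∀ n : ℕ, hn n = ∑' w : {w : W L // len w = n}, Tw (w : W L))
    (Tr : Fin L → H L →L[ℂ] H L)
    (hTr : ∀ (s : Fin L) (w : W L),
      Tr s (δ w) =
        if len (w * σ s) < len w then δ (w * σ s) + (p : ℂ) • δ w else δ (w * σ s))
    (Twr : W L → H L →L[ℂ] H L) (hTwr1 : Twr 1 = 1)
    (hTwrrec : ∀ (s : Fin L) (w : W L), len (w * σ s) < len w →
      Twr w = Tr s ∘L Twr (w * σ s))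
    (hnr : ℕ → H L →L[ℂ] H L)
    (hhnr : ∀ n : ℕ, hnr n = ∑' w : {w : W L // len w = n}, Twr (w : W L))
    (Q : ℕ → H L →L[ℂ] H L)
    (hQ : ∀ (l : ℕ) (w : W L), Q l (δ w) = if len w = l then δ w else 0)
    (l : ℕ) (hl : 1 ≤ l) (ξ : H L) (hξmem : ξ ∈ V L l)
    (m n : ℕ) (hm : 1 ≤ m) :
    h (Q (m + n + l) (hn m (hnr n ξ))) =
      Q (m + 1 + n + l) (hn (m + 1) (hnr n ξ)) +
        (p : ℂ) • Q (m + n + l) (hn m (hnr n ξ)) +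
          ((L : ℂ) - 1) • Q (m - 1 + n + l) (hn (m - 1) (hnr n ξ)) := by
  have hT' : IsLeftHeckeGenerators (p : ℂ) T := hT
  have hTr' : IsRightHeckeGenerators (p : ℂ) Tr := hTr
  have hTw : IsLeftHeckeBasis T Tw := ⟨hTw1, hTwrec⟩
  have hTwr : IsRightHeckeBasis Tr Twr := ⟨hTwr1, hTwrrec⟩
  have hQ' : IsLenProjection Q := hQ
  have hraise : hnr n ξ ∈ spanLenLT L (n + l + 1) := by
    rw [hhnr, show n + l + 1 = l + 1 + n by ring]
    exact raisesLenBy_tsum (hTwr.raisesLenBy hTr') n _ _ (V_le_spanLenLT l hξmem)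
  have hreduce : ∀ k, Q (k + n + l) (hn k (hnr n ξ)) =
      Q (k + (n + l)) (hn k (Q (n + l) (hnr n ξ))) := fun k => by
    have hlow : hn k (hnr n ξ - Q (n + l) (hnr n ξ)) ∈ spanLenLT L (n + l + k) := by
      rw [hhn]
      exact raisesLenBy_tsum (hTw.raisesLenBy hT') k _ _ (hQ'.sub_apply_mem hraise)
    rw [← sub_add_cancel (hnr n ξ) (Q (n + l) (hnr n ξ)), map_add, map_add, add_assoc,
      add_comm k, hQ'.apply_eq_zero hlow, zero_add, sub_add_cancel]
  rw [hreduce, hreduce, hreduce, hh]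
  exact hTw.recurrence_of_mem_V hT' hQ' hhn (by omega) hm (hQ'.apply_mem_V hraise)

theorem statement4
    (L : ℕ) (hL : 3 ≤ L) (q p : ℝ) (hq : 0 < q) (hq1 : q ≤ 1)
    (hp : p = (q - 1) / Real.sqrt q)
    (T : Fin L → H L →L[ℂ] H L)
    (hT : ∀ (s : Fin L) (w : W L),
      T s (δ w) =
        if len (σ s * w) < len w then δ (σ s * w) + (p : ℂ) • δ w else δ (σ s * w))
    (h : H L →L[ℂ] H L) (hh : h = ∑ s, T s)
    (Tw : W L → H L →L[ℂ] H L) (hTw1 : Tw 1 = 1)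
    (hTwrec : ∀ (s : Fin L) (w : W L), len (σ s * w) < len w →
      Tw w = T s ∘L Tw (σ s * w))
    (hn : ℕ → H L →L[ℂ] H L)
    (hhn : ∀ n : ℕ, hn n = ∑' w : {w : W L // len w = n}, Tw (w : W L))
    (Tr : Fin L → H L →L[ℂ] H L)
    (hTr : ∀ (s : Fin L) (w : W L),
      Tr s (δ w) =
        if len (w * σ s) < len w then δ (w * σ s) + (p : ℂ) • δ w else δ (w * σ s))
    (Twr : W L → H L →L[ℂ] H L) (hTwr1 : Twr 1 = 1)
    (hTwrrec : ∀ (s : Fin L) (w : W L), len (w * σ s) < len w →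
      Twr w = Tr s ∘L Twr (w * σ s))
    (hnr : ℕ → H L →L[ℂ] H L)
    (hhnr : ∀ n : ℕ, hnr n = ∑' w : {w : W L // len w = n}, Twr (w : W L))
    (Q : ℕ → H L →L[ℂ] H L)
    (hQ : ∀ (l : ℕ) (w : W L), Q l (δ w) = if len w = l then δ w else 0)
    (l : ℕ) (hl : 1 ≤ l) (ξ : H L) (hξmem : ξ ∈ V L l)
    (m n : ℕ) (hm : 1 ≤ m) :
    h (Q (m + n + l) (hn m (hnr n ξ))) =
      Q (m + 1 + n + l) (hn (m + 1) (hnr n ξ)) +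
        (p : ℂ) • Q (m + n + l) (hn m (hnr n ξ)) +
          ((L : ℂ) - 1) • Q (m - 1 + n + l) (hn (m - 1) (hnr n ξ)) :=
  statement4_general L p T hT h hh Tw hTw1 hTwrec hn hhn Tr hTr Twr hTwr1 hTwrrec hnr hhnr Q hQ l hl
    ξ hξmem m n hm

end UCoxMasa
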